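/- Let D ⊂ ℝ² be a bounded domain with boundary Γ, circumradius R (with circumscribed disk centered at the origin) and inradius ρ. Then Γ ⊂ B_R \ B_{2ρ−R}, i.e., every boundary point p satisfies 2ρ − R ≤ |p| ≤ R. -/

import Mathlib

/-!
A disk `B(c, r) ⊆ D` sits inside the circumdisk `B(0, R)`, so `‖c‖ + r ≤ R`, and it misses every
boundary point `p`, so `r ≤ ‖p - c‖ ≤ ‖p‖ + ‖c‖`. Adding the two gives `2r ≤ ‖p‖ + R`, and taking
the supremum over inscribed disks gives `2ρ - R ≤ ‖p‖`. The bound `‖p‖ ≤ R` holds because the closed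
circumdisk contains the closure of `D`.
-/

open Set Metric Bornology

noncomputable def inradius (D : Set (EuclideanSpace ℝ (Fin 2))) : ℝ :=
  sSup {r : ℝ | 0 ≤ r ∧ ∃ c, ball c r ⊆ D}

section NormedSpace

variable {E : Type*} [NormedAddCommGroup E] [NormedSpace ℝ E] [Nontrivial E]

theorem exists_sameRay_norm_eq (v : E) {t : ℝ} (ht : 0 ≤ t) : ∃ u : E, SameRay ℝ v u ∧ ‖u‖ = t := by
  by_cases hv : v = 0
  · obtain ⟨u, hu⟩ := exists_norm_eq E ht
    exact ⟨u, hv ▸ SameRay.zero_left u, hu⟩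
  · have hv' : 0 < ‖v‖ := norm_pos_iff.mpr hv
    refine ⟨(t / ‖v‖) • v, SameRay.sameRay_nonneg_smul_right v (by positivity), ?_⟩
    rw [norm_smul, Real.norm_of_nonneg (by positivity), div_mul_cancel₀ _ hv'.ne']

theorem dist_add_le_of_ball_subset_closedBall {c x : E} {r R : ℝ} (hr : 0 < r)
    (h : ball c r ⊆ closedBall x R) : dist c x + r ≤ R := by
  have hclosed : closedBall c r ⊆ closedBall x R := by
    rw [← closure_ball c hr.ne']
    exact closure_minimal h isClosed_closedBall
  obtain ⟨u, hray, hu⟩ := exists_sameRay_norm_eq (c - x) hr.le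
  have hmem : c + u ∈ closedBall x R :=
    hclosed (by rw [mem_closedBall, dist_eq_norm, add_sub_cancel_left, hu])
  rw [mem_closedBall, dist_eq_norm, add_sub_right_comm, hray.norm_add, hu] at hmem
  rwa [dist_eq_norm]

end NormedSpace

theorem le_dist_of_ball_subset_of_mem_frontier {X : Type*} [PseudoMetricSpace X] {D : Set X}
    {c p : X} {r : ℝ} (h : ball c r ⊆ D) (hp : p ∈ frontier D) : r ≤ dist p c := by
  by_contra! hpc
  exact hp.2 (interior_maximal h isOpen_ball (mem_ball.mpr hpc))

theorem inradius_le {D : Set (EuclideanSpace ℝ (Fin 2))} {b : ℝ} (hb : 0 ≤ b)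
    (h : ∀ c r, 0 < r → ball c r ⊆ D → r ≤ b) : inradius D ≤ b := by
  refine Real.sSup_le ?_ hb
  rintro r ⟨hr, c, hc⟩
  rcases hr.eq_or_lt with rfl | hr
  · exact hb
  · exact h c r hr hc

theorem boundary_in_annulus_general (D : Set (EuclideanSpace ℝ (Fin 2))) (R ρ : ℝ)
    (hsub : D ⊆ closedBall 0 R)
    (hρ : ρ = inradius D) :
    ∀ p ∈ frontier D, 2 * ρ - R ≤ ‖p‖ ∧ ‖p‖ ≤ R := by
  intro p hp
  have hpR : ‖p‖ ≤ R := mem_closedBall_zero_iff.mp <|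
    closure_minimal hsub isClosed_closedBall (frontier_subset_closure hp)
  refine ⟨?_, hpR⟩
  have hρp : inradius D ≤ (‖p‖ + R) / 2 := by
    refine inradius_le (by linarith [norm_nonneg p]) fun c r hr hc => ?_
    have hcR : ‖c‖ + r ≤ R := by
      simpa using dist_add_le_of_ball_subset_closedBall hr (hc.trans hsub)
    have hrp : r ≤ dist p c := le_dist_of_ball_subset_of_mem_frontier hc hp
    linarith [dist_le_norm_add_norm p c]
  linarith

/-- If `D` is a bounded planar domain whose circumscribed disk has center the origin and
radius `R`, and `ρ` is the inradius of `D`, then the boundary `Γ = ∂D` is contained in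
the annulus `B_R \ B_{2ρ - R}`: every `p ∈ ∂D` satisfies `2ρ - R ≤ |p| ≤ R`. -/
theorem boundary_in_annulus (D : Set (EuclideanSpace ℝ (Fin 2))) (R ρ : ℝ)
    (hDo : IsOpen D) (hDc : IsConnected D) (hDb : IsBounded D)
    (hsub : D ⊆ closedBall 0 R)
    (hmin : ∀ (c : EuclideanSpace ℝ (Fin 2)) (r : ℝ), D ⊆ closedBall c r → R ≤ r)
    (hρ : ρ = inradius D) :
    ∀ p ∈ frontier D, 2 * ρ - R ≤ ‖p‖ ∧ ‖p‖ ≤ R :=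
  boundary_in_annulus_general D R ρ hsub hρ
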